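/- Let A₁, A₂ ⊆ E be nonempty finite sets and let λ ≥ 0. Then the outer critical set Crit_out(Φ_λ) = {x ∈ E : 0 ∈ G_λ(x)} is finite. -/

import Mathlib

open MeasureTheory Metric Filter Topology

/-- The set `Π_A(x)` of nearest points of `x` in `A`. -/
def nearestPts {d : ℕ} (A : Set (EuclideanSpace ℝ (Fin d)))
    (x : EuclideanSpace ℝ (Fin d)) : Set (EuclideanSpace ℝ (Fin d)) :=
  {a ∈ A | ‖x - a‖ = Metric.infDist x A}

/-- The outer-Clarke field
`G_λ(z) = conv {2λ(z-a₁) + 2(1-λ)(z-a₂) : a₁ ∈ Π_{A₁}(z), a₂ ∈ Π_{A₂}(z)}`. -/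
noncomputable def outerClarkeField {d : ℕ} (A₁ A₂ : Set (EuclideanSpace ℝ (Fin d))) (lam : ℝ)
    (z : EuclideanSpace ℝ (Fin d)) : Set (EuclideanSpace ℝ (Fin d)) :=
  convexHull ℝ
    (Set.image2 (fun a₁ a₂ => (2 * lam) • (z - a₁) + (2 * (1 - lam)) • (z - a₂))
      (nearestPts A₁ z) (nearestPts A₂ z))

/-!
A critical point `z` is determined by its pair of nearest-point sets `(P₁, P₂)`, of which there
are finitely many. Indeed `0 ∈ G_λ(z)` lies in the affine span of the generators of `G_λ(z)`,
whose direction is contained in `V = vectorSpan P₁ ⊔ vectorSpan P₂`, so the generator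
`2λ(z - b₁) + 2(1-λ)(z - b₂)` lies in `V`. Since `2λ + 2(1-λ) = 2`, for two critical points
`z, z'` with the same nearest-point sets the difference of these generators is `2(z - z') ∈ V`.
But `z` and `z'` are both equidistant from all points of `P₁` and from all points of `P₂`, so
`z - z' ⟂ V`.
-/

section Module

variable {E : Type*} [AddCommGroup E] [Module ℝ E]

lemma sub_mem_vectorSpan_of_mem_convexHull {s : Set E} {x y : E}
    (hx : x ∈ convexHull ℝ s) (hy : y ∈ s) : y - x ∈ vectorSpan ℝ s := by
  rw [← direction_affineSpan]
  exact AffineSubspace.vsub_mem_direction (subset_affineSpan ℝ s hy)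
    (convexHull_subset_affineSpan s hx)

lemma vectorSpan_image2_le_sup (α β : ℝ) (z : E) (P₁ P₂ : Set E) :
    vectorSpan ℝ (Set.image2 (fun a₁ a₂ => α • (z - a₁) + β • (z - a₂)) P₁ P₂) ≤
      vectorSpan ℝ P₁ ⊔ vectorSpan ℝ P₂ := by
  rw [vectorSpan_def, Submodule.span_le]
  rintro _ ⟨_, ⟨a₁, ha₁, a₂, ha₂, rfl⟩, _, ⟨a₁', ha₁', a₂', ha₂', rfl⟩, rfl⟩
  have hdiff : (α • (z - a₁) + β • (z - a₂)) -ᵥ (α • (z - a₁') + β • (z - a₂')) =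
      α • (a₁' -ᵥ a₁) + β • (a₂' -ᵥ a₂) := by
    simp only [vsub_eq_sub]; module
  dsimp only
  rw [SetLike.mem_coe, hdiff]
  exact add_mem (Submodule.mem_sup_left (Submodule.smul_mem _ _ (vsub_mem_vectorSpan ℝ ha₁' ha₁)))
    (Submodule.mem_sup_right (Submodule.smul_mem _ _ (vsub_mem_vectorSpan ℝ ha₂' ha₂)))

end Module

section InnerProductSpace

variable {E : Type*} [NormedAddCommGroup E] [InnerProductSpace ℝ E]

lemma vectorSpan_le_orthogonal_of_subset_sphere {P : Set E} {c c' : E} {r r' : ℝ}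
    (hc : P ⊆ sphere c r) (hc' : P ⊆ sphere c' r') :
    vectorSpan ℝ P ≤ (ℝ ∙ (c' - c))ᗮ := by
  rw [vectorSpan_def, Submodule.span_le]
  rintro _ ⟨p₁, hp₁, p₂, hp₂, rfl⟩
  rw [SetLike.mem_coe, Submodule.mem_orthogonal_singleton_iff_inner_right]
  exact EuclideanGeometry.inner_vsub_vsub_of_dist_eq_of_dist_eq
    ((mem_sphere.1 (hc hp₂)).trans (mem_sphere.1 (hc hp₁)).symm)
    ((mem_sphere.1 (hc' hp₂)).trans (mem_sphere.1 (hc' hp₁)).symm)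

end InnerProductSpace

section NearestPoints

variable {d : ℕ}

lemma nearestPts_subset (A : Set (EuclideanSpace ℝ (Fin d))) (x : EuclideanSpace ℝ (Fin d)) :
    nearestPts A x ⊆ A :=
  fun _ ha => ha.1

lemma nearestPts_subset_sphere (A : Set (EuclideanSpace ℝ (Fin d)))
    (x : EuclideanSpace ℝ (Fin d)) : nearestPts A x ⊆ sphere x (infDist x A) :=
  fun a ha => by rw [mem_sphere, dist_comm, dist_eq_norm, ha.2]

lemma vectorSpan_nearestPts_le_orthogonal {A : Set (EuclideanSpace ℝ (Fin d))}
    {z z' : EuclideanSpace ℝ (Fin d)} (h : nearestPts A z = nearestPts A z') :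
    vectorSpan ℝ (nearestPts A z) ≤ (ℝ ∙ (z - z'))ᗮ := by
  have hz' : nearestPts A z ⊆ sphere z' (infDist z' A) := by
    rw [h]
    exact nearestPts_subset_sphere A z'
  exact vectorSpan_le_orthogonal_of_subset_sphere hz' (nearestPts_subset_sphere A z)

lemma critical_mem_vectorSpan {A₁ A₂ : Set (EuclideanSpace ℝ (Fin d))} {lam : ℝ}
    {z b₁ b₂ : EuclideanSpace ℝ (Fin d)} (hz : 0 ∈ outerClarkeField A₁ A₂ lam z)
    (hb₁ : b₁ ∈ nearestPts A₁ z) (hb₂ : b₂ ∈ nearestPts A₂ z) :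
    (2 * lam) • (z - b₁) + (2 * (1 - lam)) • (z - b₂) ∈
      vectorSpan ℝ (nearestPts A₁ z) ⊔ vectorSpan ℝ (nearestPts A₂ z) := by
  have h := sub_mem_vectorSpan_of_mem_convexHull hz (Set.mem_image2_of_mem hb₁ hb₂)
  rw [sub_zero] at h
  exact vectorSpan_image2_le_sup _ _ z _ _ h

lemma injOn_nearestPts_critical (A₁ A₂ : Set (EuclideanSpace ℝ (Fin d))) (lam : ℝ) :
    Set.InjOn (fun z => (nearestPts A₁ z, nearestPts A₂ z))
      {x | 0 ∈ outerClarkeField A₁ A₂ lam x} := by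
  intro z (hz : 0 ∈ outerClarkeField A₁ A₂ lam z) z' (hz' : 0 ∈ outerClarkeField A₁ A₂ lam z')
    h
  obtain ⟨h₁, h₂⟩ := Prod.mk.inj h
  obtain ⟨⟨b₁, hb₁⟩, ⟨b₂, hb₂⟩⟩ := Set.image2_nonempty_iff.1 (convexHull_nonempty_iff.1 ⟨0, hz⟩)
  have hzV := critical_mem_vectorSpan hz hb₁ hb₂
  have hz'V := critical_mem_vectorSpan hz' (by rwa [← h₁]) (by rwa [← h₂])
  rw [← h₁, ← h₂] at hz'V
  have hsub : z - z' ∈ vectorSpan ℝ (nearestPts A₁ z) ⊔ vectorSpan ℝ (nearestPts A₂ z) := by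
    refine (Submodule.smul_mem_iff _ (two_ne_zero (α := ℝ))).1 ?_
    convert sub_mem hzV hz'V using 1
    module
  have horth : vectorSpan ℝ (nearestPts A₁ z) ⊔ vectorSpan ℝ (nearestPts A₂ z) ≤
      (ℝ ∙ (z - z'))ᗮ :=
    sup_le (vectorSpan_nearestPts_le_orthogonal h₁) (vectorSpan_nearestPts_le_orthogonal h₂)
  have hself := horth hsub
  rwa [Submodule.mem_orthogonal_singleton_iff_inner_right, inner_self_eq_zero,
    sub_eq_zero] at hself

end NearestPoints

theorem outer_critical_set_finite_general
    (d : ℕ)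
    (A₁ A₂ : Set (EuclideanSpace ℝ (Fin d)))
    (hA₁fin : A₁.Finite) (hA₂fin : A₂.Finite)
    (lam : ℝ) :
    {x : EuclideanSpace ℝ (Fin d) | 0 ∈ outerClarkeField A₁ A₂ lam x}.Finite := by
  refine Set.Finite.of_finite_image ?_ (injOn_nearestPts_critical A₁ A₂ lam)
  refine (hA₁fin.finite_subsets.prod hA₂fin.finite_subsets).subset ?_
  rintro _ ⟨z, -, rfl⟩
  exact ⟨nearestPts_subset A₁ z, nearestPts_subset A₂ z⟩

theorem outer_critical_set_finite
    (d : ℕ) (hd : 1 ≤ d)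
    (A₁ A₂ : Set (EuclideanSpace ℝ (Fin d)))
    (hA₁ : A₁.Nonempty) (hA₂ : A₂.Nonempty)
    (hA₁fin : A₁.Finite) (hA₂fin : A₂.Finite)
    (lam : ℝ) (hlam : 0 ≤ lam) :
    {x : EuclideanSpace ℝ (Fin d) | 0 ∈ outerClarkeField A₁ A₂ lam x}.Finite :=
  outer_critical_set_finite_general d A₁ A₂ hA₁fin hA₂fin lam
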